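/- Let ‖·‖ be a norm on c₀₀ that is permutation-invariant and multiplicative. Then there exists p ∈ [1,+∞] such that for every n ≥ 1, the norm of the sequence 1ⁿ consisting of n ones followed by zeros equals n^{1/p} (with the convention n^{1/∞} = 1). -/

import Mathlib

/-! Permutation invariance makes `N` of the indicator of a finite set depend only on its size, and
the tensor product of indicators of `s` and `t` is the indicator of `s × t`; so `f n = N (1ⁿ)` is
completely multiplicative, with `f 1 = 1` and `f 2 ≤ 2`. Tensoring with `(1, -1)` turns a sign
change of one coordinate into a transposition, so `N` is invariant under sign changes; averaging
`x` with its sign flip at `i` shows that erasing a coordinate does not increase `N`, hence `f` is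
monotone. A monotone completely multiplicative `f` is `n ↦ n ^ s`, by comparing `m ^ k` with the
least power of `n` above it, and `s ∈ [0, 1]`; take `p = 1 / s`. -/

open scoped ENNReal

/-- Tensor product of finitely supported sequences, regarded as a finitely
supported sequence via a fixed bijection `e : ℕ ≃ ℕ × ℕ`. -/
noncomputable def tensor (e : ℕ ≃ ℕ × ℕ) (x y : ℕ →₀ ℝ) : ℕ →₀ ℝ :=
  Finsupp.onFinset ((x.support ×ˢ y.support).image e.symm)
    (fun n => x (e n).1 * y (e n).2)
    (fun n h => by
      simp only [Finset.mem_image, Finset.mem_product]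
      exact ⟨e n, ⟨Finsupp.mem_support_iff.2 (left_ne_zero_of_mul h),
        Finsupp.mem_support_iff.2 (right_ne_zero_of_mul h)⟩, e.symm_apply_apply n⟩)

/-- The sequence `1ⁿ` consisting of `n` ones followed by zeros. -/
noncomputable def oneVec (n : ℕ) : ℕ →₀ ℝ :=
  Finsupp.indicator (Finset.range n) (fun _ _ => 1)

open Finset Real

noncomputable def onesOn (s : Finset ℕ) : ℕ →₀ ℝ :=
  Finsupp.indicator s fun _ _ => 1

lemma onesOn_apply (s : Finset ℕ) (i : ℕ) : onesOn s i = if i ∈ s then 1 else 0 := by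
  classical
  simp [onesOn, Finsupp.indicator_apply]

lemma oneVec_eq_onesOn (n : ℕ) : oneVec n = onesOn (range n) := rfl

lemma equivMapDomain_onesOn (σ : Equiv.Perm ℕ) (s : Finset ℕ) :
    Finsupp.equivMapDomain σ (onesOn s) = onesOn (s.map σ.toEmbedding) := by
  ext i
  simp [onesOn_apply, Finset.mem_map_equiv]

lemma tensor_apply (e : ℕ ≃ ℕ × ℕ) (x y : ℕ →₀ ℝ) (i : ℕ) :
    tensor e x y i = x (e i).1 * y (e i).2 := rfl

lemma tensor_onesOn (e : ℕ ≃ ℕ × ℕ) (s t : Finset ℕ) :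
    tensor e (onesOn s) (onesOn t) = onesOn ((s ×ˢ t).map e.symm.toEmbedding) := by
  ext i
  simp only [tensor_apply, onesOn_apply, ite_zero_mul_ite_zero, mul_one, mem_map_equiv,
    Equiv.symm_symm, mem_product]

section

variable {N : (ℕ →₀ ℝ) → ℝ}

lemma norm_onesOn_eq (hperm : ∀ (σ : Equiv.Perm ℕ) (x), N (Finsupp.equivMapDomain σ x) = N x)
    (s : Finset ℕ) : N (onesOn s) = N (oneVec #s) := by
  obtain ⟨σ, hσ⟩ := Equiv.Perm.exists_map_finset_eq s (range #s) (card_range _).symm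
  rw [oneVec_eq_onesOn, ← hσ, ← equivMapDomain_onesOn, hperm]

lemma norm_oneVec_mul (e : ℕ ≃ ℕ × ℕ)
    (hperm : ∀ (σ : Equiv.Perm ℕ) (x), N (Finsupp.equivMapDomain σ x) = N x)
    (hmul : ∀ x y, N (tensor e x y) = N x * N y) (m n : ℕ) :
    N (oneVec (m * n)) = N (oneVec m) * N (oneVec n) := by
  rw [oneVec_eq_onesOn m, oneVec_eq_onesOn n, ← hmul, tensor_onesOn, norm_onesOn_eq hperm,
    card_map, card_product, card_range, card_range]

lemma norm_oneVec_one (e : ℕ ≃ ℕ × ℕ) (hdef : ∀ x, N x = 0 ↔ x = 0)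
    (hperm : ∀ (σ : Equiv.Perm ℕ) (x), N (Finsupp.equivMapDomain σ x) = N x)
    (hmul : ∀ x y, N (tensor e x y) = N x * N y) : N (oneVec 1) = 1 := by
  have hne : N (oneVec 1) ≠ 0 := by
    rw [ne_eq, hdef]
    intro h
    simpa [oneVec_eq_onesOn, onesOn_apply] using congrArg (· 0) h
  have hsq := norm_oneVec_mul e hperm hmul 1 1
  rwa [one_mul, eq_comm, mul_eq_left₀ hne] at hsq

lemma norm_oneVec_add_le (hadd : ∀ x y, N (x + y) ≤ N x + N y)
    (hperm : ∀ (σ : Equiv.Perm ℕ) (x), N (Finsupp.equivMapDomain σ x) = N x) (m n : ℕ) :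
    N (oneVec (m + n)) ≤ N (oneVec m) + N (oneVec n) := by
  have hsplit : oneVec (m + n) = oneVec m + onesOn (Ico m (m + n)) := by
    ext i
    simp only [oneVec_eq_onesOn, Finsupp.add_apply, onesOn_apply, mem_range, mem_Ico]
    split_ifs <;> first | omega | norm_num
  calc N (oneVec (m + n)) ≤ N (oneVec m) + N (onesOn (Ico m (m + n))) := hsplit ▸ hadd _ _
    _ = N (oneVec m) + N (oneVec n) := by
      rw [norm_onesOn_eq hperm, Nat.card_Ico, Nat.add_sub_cancel_left]

lemma norm_update_neg (e : ℕ ≃ ℕ × ℕ) (hdef : ∀ x, N x = 0 ↔ x = 0)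
    (hperm : ∀ (σ : Equiv.Perm ℕ) (x), N (Finsupp.equivMapDomain σ x) = N x)
    (hmul : ∀ x y, N (tensor e x y) = N x * N y) (x : ℕ →₀ ℝ) (i : ℕ) :
    N (x.update i (-x i)) = N x := by
  -- `w ∘ swap 0 1 = -w`, so flipping the sign of `x i` permutes the coordinates of `x ⊗ w`.
  set w : ℕ →₀ ℝ := Finsupp.single 0 1 - Finsupp.single 1 1
  have hw : N w ≠ 0 := by
    rw [ne_eq, hdef]
    intro h
    simpa [w] using congrArg (· 0) h
  have hswap : Finsupp.equivMapDomain (Equiv.swap (e.symm (i, 0)) (e.symm (i, 1))) (tensor e x w)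
      = tensor e (x.update i (-x i)) w := by
    ext q
    obtain ⟨⟨a, b⟩, rfl⟩ := e.symm.surjective q
    simp only [Finsupp.equivMapDomain_apply, Equiv.symm_swap, Equiv.swap_apply_def,
      e.symm.injective.eq_iff, Prod.mk.injEq]
    by_cases ha : a = i <;> by_cases hb0 : b = 0 <;> by_cases hb1 : b = 1 <;>
      simp_all [tensor_apply, w, Finsupp.update_apply]
  exact mul_right_cancel₀ hw (by rw [← hmul, ← hmul, ← hswap, hperm])

lemma norm_erase_le (e : ℕ ≃ ℕ × ℕ) (hadd : ∀ x y, N (x + y) ≤ N x + N y)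
    (hsmul : ∀ (c : ℝ) (x), N (c • x) = |c| * N x) (hdef : ∀ x, N x = 0 ↔ x = 0)
    (hperm : ∀ (σ : Equiv.Perm ℕ) (x), N (Finsupp.equivMapDomain σ x) = N x)
    (hmul : ∀ x y, N (tensor e x y) = N x * N y) (x : ℕ →₀ ℝ) (i : ℕ) :
    N (x.erase i) ≤ N x := by
  have hmid : (2 : ℝ) • x.erase i = x + x.update i (-x i) := by
    ext j
    simp only [Finsupp.smul_apply, Finsupp.erase_apply, Finsupp.add_apply, Finsupp.update_apply,
      smul_eq_mul]
    split_ifs with h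
    · rw [h]; ring
    · ring
  have h := hadd x (x.update i (-x i))
  rw [← hmid, hsmul, norm_update_neg e hdef hperm hmul] at h
  norm_num at h
  linarith

lemma norm_oneVec_mono (e : ℕ ≃ ℕ × ℕ) (hadd : ∀ x y, N (x + y) ≤ N x + N y)
    (hsmul : ∀ (c : ℝ) (x), N (c • x) = |c| * N x) (hdef : ∀ x, N x = 0 ↔ x = 0)
    (hperm : ∀ (σ : Equiv.Perm ℕ) (x), N (Finsupp.equivMapDomain σ x) = N x)
    (hmul : ∀ x y, N (tensor e x y) = N x * N y) : Monotone fun n => N (oneVec n) := by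
  refine monotone_nat_of_le_succ fun n => ?_
  have herase : (oneVec (n + 1)).erase n = oneVec n := by
    ext i
    simp only [Finsupp.erase_apply, oneVec_eq_onesOn, onesOn_apply, mem_range]
    split_ifs <;> first | omega | rfl
  simpa only [herase] using norm_erase_le e hadd hsmul hdef hperm hmul (oneVec (n + 1)) n

end

lemma log_mul_log_le_of_monotone (f : ℕ →* ℝ) (hf : Monotone f) {m n : ℕ} (hm : 2 ≤ m)
    (hn : 2 ≤ n) : log (f m) * log n ≤ log (f n) * log m := by
  have hlogn : 0 < log n := log_pos (by exact_mod_cast hn)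
  have hfn : 0 ≤ log (f n) := log_nonneg (map_one f ▸ hf (by omega))
  have hk : ∀ k : ℕ, k * (log (f m) * log n - log (f n) * log m) ≤ log (f n) * log n := by
    intro k
    set j := ⌈k * log m / log n⌉₊
    have hj : k * log m ≤ j * log n := (div_le_iff₀ hlogn).1 (Nat.le_ceil _)
    have hj' : j * log n < k * log m + log n :=
      calc (j : ℝ) * log n < (k * log m / log n + 1) * log n := by
            gcongr
            exact Nat.ceil_lt_add_one (by positivity)
        _ = k * log m + log n := by field_simp
    have hmn : m ^ k ≤ n ^ j := by
      have : log ((m : ℝ) ^ k) ≤ log ((n : ℝ) ^ j) := by rwa [log_pow, log_pow]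
      exact_mod_cast (log_le_log_iff (by positivity) (by positivity)).1 this
    have hkj : k * log (f m) ≤ j * log (f n) := by
      rw [← log_pow, ← log_pow, ← map_pow, ← map_pow]
      exact log_le_log (one_pos.trans_le (map_one f ▸ hf (Nat.one_le_pow k m (by omega))))
        (hf hmn)
    linarith [mul_le_mul_of_nonneg_right hj'.le hfn, mul_le_mul_of_nonneg_right hkj hlogn.le]
  by_contra! hlt
  obtain ⟨k, hk'⟩ := exists_nat_gt (log (f n) * log n / (log (f m) * log n - log (f n) * log m))
  rw [div_lt_iff₀ (sub_pos.2 hlt)] at hk'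
  linarith [hk k]

lemma eq_rpow_of_monotone (f : ℕ →* ℝ) (hf : Monotone f) {n : ℕ} (hn : 1 ≤ n) :
    f n = n ^ (log (f 2) / log 2) := by
  obtain rfl | hn2 : n = 1 ∨ 2 ≤ n := by omega
  · simp
  have hfn : 0 < f n := one_pos.trans_le (map_one f ▸ hf hn)
  have hlogn : log n ≠ 0 := (log_pos (by exact_mod_cast hn2)).ne'
  have hcross : log (f n) * log 2 = log (f 2) * log n := by
    exact_mod_cast le_antisymm (log_mul_log_le_of_monotone f hf hn2 le_rfl)
      (log_mul_log_le_of_monotone f hf le_rfl hn2)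
  have hlog : log n * (log (f 2) / log 2) = log (f n) := by
    field_simp
    linarith
  rw [rpow_def_of_pos (by positivity), hlog, exp_log hfn]

lemma exists_one_le_ennreal_rpow_eq {s : ℝ} (hs0 : 0 ≤ s) (hs1 : s ≤ 1) :
    ∃ p : ℝ≥0∞, 1 ≤ p ∧ ∀ x : ℝ, (if p = ∞ then 1 else x ^ (1 / p.toReal)) = x ^ s := by
  refine ⟨(ENNReal.ofReal s)⁻¹, ENNReal.one_le_inv.2 (ENNReal.ofReal_le_one.2 hs1), fun x => ?_⟩
  obtain rfl | hs : s = 0 ∨ 0 < s := hs0.eq_or_lt'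
  · simp
  rw [if_neg (ENNReal.inv_ne_top.2 (ENNReal.ofReal_pos.2 hs).ne'), ENNReal.toReal_inv,
    ENNReal.toReal_ofReal hs0, one_div, inv_inv]

/-- For a permutation-invariant multiplicative norm on `c₀₀` there exists
`p ∈ [1,∞]` with `‖1ⁿ‖ = n^(1/p)` for all `n ≥ 1` (with `n^(1/∞) = 1`). -/
theorem norm_oneVec_eq_rpow
    (e : ℕ ≃ ℕ × ℕ) (N : (ℕ →₀ ℝ) → ℝ)
    (hadd : ∀ x y, N (x + y) ≤ N x + N y)
    (hsmul : ∀ (c : ℝ) (x), N (c • x) = |c| * N x)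
    (hdef : ∀ x, N x = 0 ↔ x = 0)
    (hperm : ∀ (σ : Equiv.Perm ℕ) (x), N (Finsupp.equivMapDomain σ x) = N x)
    (hmul : ∀ x y, N (tensor e x y) = N x * N y) :
    ∃ p : ℝ≥0∞, 1 ≤ p ∧ ∀ n : ℕ, 1 ≤ n →
      N (oneVec n) = if p = ∞ then 1 else (n : ℝ) ^ (1 / p.toReal) := by
  let f : ℕ →* ℝ :=
    { toFun n := N (oneVec n)
      map_one' := norm_oneVec_one e hdef hperm hmul
      map_mul' := norm_oneVec_mul e hperm hmul }
  have hf : Monotone f := norm_oneVec_mono e hadd hsmul hdef hperm hmul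
  have hf2 : 1 ≤ f 2 := map_one f ▸ hf one_le_two
  have hf2' : f 2 ≤ 2 := by
    have h := norm_oneVec_add_le hadd hperm 1 1
    rwa [norm_oneVec_one e hdef hperm hmul, one_add_one_eq_two, one_add_one_eq_two] at h
  obtain ⟨p, hp, hpow⟩ := exists_one_le_ennreal_rpow_eq (s := log (f 2) / log 2)
    (div_nonneg (log_nonneg hf2) (log_nonneg one_le_two))
    ((div_le_one (log_pos one_lt_two)).2 (log_le_log (by linarith) hf2'))
  exact ⟨p, hp, fun n hn => (eq_rpow_of_monotone f hf hn).trans (hpow n).symm⟩
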